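/- Let U, Û ∈ ℝ^{p×d} have orthonormal columns, and let Ξ be the orthogonal d×d matrix minimizing ‖W − UᵀÛ‖_F over orthogonal W. Then ‖UᵀÛ − Ξ‖₂ ≤ ‖sin Θ(Û, U)‖₂², where sin Θ(Û,U) is the diagonal matrix of principal angle sines between the column spaces of Û and U. -/

import Mathlib

open Matrix

noncomputable def l2 {n : ℕ} (v : Fin n → ℝ) : ℝ := Real.sqrt (∑ j, v j ^ 2)

/-- The spectral norm: sup of ‖Mx‖₂ over the ℓ₂ unit sphere. -/
noncomputable def spec {p₁ p₂ : ℕ} (M : Matrix (Fin p₁) (Fin p₂) ℝ) : ℝ :=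
  ⨆ x : {x : Fin p₂ → ℝ // l2 x = 1}, l2 (M.mulVec x.1)

/-- The Frobenius norm of a matrix. -/
noncomputable def frob {p₁ p₂ : ℕ} (M : Matrix (Fin p₁) (Fin p₂) ℝ) : ℝ :=
  Real.sqrt (∑ i, ∑ j, M i j ^ 2)

/-- The sin-Θ distance between the column spaces of `Û` and `U`:
`‖(I − UUᵀ) ÛÛᵀ‖₂`. -/
noncomputable def sinTheta {p d : ℕ} (Uhat U : Matrix (Fin p) (Fin d) ℝ) : ℝ :=
  spec ((1 - U * Uᵀ) * (Uhat * Uhatᵀ))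

open scoped Matrix.Norms.L2Operator

/-!
Let `A = UᵀÛ` and `S = ΞᵀA`. Since `‖W - A‖_F² = d - 2 tr(WᵀA) + ‖A‖_F²` for orthogonal `W`,
minimality of `Ξ` says that `Q ↦ tr(QS)` is maximal at `Q = 1` on the orthogonal group. Testing
this against the one-parameter groups `exp(tK)`, `K` skew, shows that `S` is symmetric, and
testing it against Householder reflections shows that `S` is positive semidefinite. For a unit
eigenvector `y` of `S` with eigenvalue `μ ≥ 0`, the vector `z = Ûy` is a unit vector with
`‖Uᵀz‖ = ‖ΞSy‖ = μ`, so by Pythagoras `1 - μ² = ‖(I - UUᵀ)z‖² ≤ ‖sin Θ‖²`; in particular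
`μ ≤ 1`, hence `|μ - 1| ≤ 1 - μ² ≤ ‖sin Θ‖²`. Finally `‖A - Ξ‖ = ‖Ξ(S - I)‖ = ‖S - I‖` is the
largest of the numbers `|μ - 1|`.
-/

lemma dotProduct_self_eq_norm_sq {n : Type*} [Fintype n] (v : n → ℝ) :
    v ⬝ᵥ v = ‖WithLp.toLp 2 v‖ ^ 2 := by
  rw [← real_inner_self_eq_norm_sq, EuclideanSpace.inner_eq_star_dotProduct]
  simp

lemma dotProduct_mulVec_self {m n : Type*} [Fintype m] [Fintype n] (M : Matrix m n ℝ)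
    (v : n → ℝ) : (M *ᵥ v) ⬝ᵥ (M *ᵥ v) = v ⬝ᵥ ((Mᵀ * M) *ᵥ v) := by
  rw [← mulVec_mulVec, dotProduct_mulVec, ← mulVec_transpose, dotProduct_comm]

lemma l2_eq_norm_toLp {n : ℕ} (v : Fin n → ℝ) : l2 v = ‖WithLp.toLp 2 v‖ := by
  rw [← Real.sqrt_sq (norm_nonneg _), ← dotProduct_self_eq_norm_sq, l2]
  simp [dotProduct, sq]

lemma spec_eq_l2_opNorm {p₁ p₂ : ℕ} (M : Matrix (Fin p₁) (Fin p₂) ℝ) : spec M = ‖M‖ := by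
  have hle : ∀ x : {x : Fin p₂ → ℝ // l2 x = 1}, l2 (M *ᵥ x.1) ≤ ‖M‖ := fun x => by
    simpa [← l2_eq_norm_toLp, x.2] using M.l2_opNorm_mulVec (WithLp.toLp 2 x.1)
  refine le_antisymm (Real.iSup_le hle (norm_nonneg M)) ?_
  rw [l2_opNorm_def]
  refine ContinuousLinearMap.opNorm_le_of_unit_norm (Real.iSup_nonneg fun _ => Real.sqrt_nonneg _)
    fun x hx => ?_
  have hx' : l2 x.ofLp = 1 := by rwa [l2_eq_norm_toLp]
  calc ‖toEuclideanLin M x‖ = l2 (M *ᵥ x.ofLp) := by rw [l2_eq_norm_toLp]; rfl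
    _ ≤ spec M := le_ciSup ⟨‖M‖, Set.forall_mem_range.2 hle⟩ (⟨x.ofLp, hx'⟩ : {x // l2 x = 1})

lemma frob_sq_eq_trace {p₁ p₂ : ℕ} (M : Matrix (Fin p₁) (Fin p₂) ℝ) :
    frob M ^ 2 = trace (Mᵀ * M) := by
  rw [frob, Real.sq_sqrt (by positivity)]
  simp only [trace, diag, mul_apply, transpose_apply, sq]
  exact Finset.sum_comm

lemma frob_sub_sq_of_mem_orthogonalGroup {d : ℕ} {W : Matrix (Fin d) (Fin d) ℝ}
    (hW : W ∈ orthogonalGroup (Fin d) ℝ) (A : Matrix (Fin d) (Fin d) ℝ) :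
    frob (W - A) ^ 2 = d - 2 * trace (Wᵀ * A) + trace (Aᵀ * A) := by
  have hAW : trace (Aᵀ * W) = trace (Wᵀ * A) := by
    rw [← trace_transpose, transpose_mul, transpose_transpose]
  rw [frob_sq_eq_trace, transpose_sub, sub_mul, mul_sub, mul_sub,
    (mem_orthogonalGroup_iff' (Fin d) ℝ).1 hW, trace_sub, trace_sub, trace_sub, trace_one,
    Fintype.card_fin, hAW]
  ring

lemma trace_mul_le_of_forall_frob_le {d : ℕ} {A Ξ : Matrix (Fin d) (Fin d) ℝ}
    (hΞ : Ξ ∈ orthogonalGroup (Fin d) ℝ)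
    (hmin : ∀ W ∈ orthogonalGroup (Fin d) ℝ, frob (Ξ - A) ≤ frob (W - A)) :
    ∀ Q ∈ orthogonalGroup (Fin d) ℝ, trace (Q * (Ξᵀ * A)) ≤ trace (Ξᵀ * A) := by
  intro Q hQ
  have hQt : Qᵀ ∈ orthogonalGroup (Fin d) ℝ := by
    rw [mem_orthogonalGroup_iff, transpose_transpose]
    exact (mem_orthogonalGroup_iff' (Fin d) ℝ).1 hQ
  have hW : Ξ * Qᵀ ∈ orthogonalGroup (Fin d) ℝ := mul_mem hΞ hQt
  have hsq : frob (Ξ - A) ^ 2 ≤ frob (Ξ * Qᵀ - A) ^ 2 :=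
    pow_le_pow_left₀ (Real.sqrt_nonneg _) (hmin _ hW) 2
  rw [frob_sub_sq_of_mem_orthogonalGroup hΞ, frob_sub_sq_of_mem_orthogonalGroup hW,
    transpose_mul, transpose_transpose, mul_assoc] at hsq
  linarith

section TraceMaximal

variable {n : Type*} [Fintype n] [DecidableEq n]

lemma hasDerivAt_trace_exp_smul_mul (K S : Matrix n n ℝ) :
    HasDerivAt (fun t : ℝ => trace (NormedSpace.exp (t • K) * S)) (trace (K * S)) 0 := by
  have h := ((traceLinearMap n ℝ ℝ).toContinuousLinearMap.comp
    ((ContinuousLinearMap.mul ℝ (Matrix n n ℝ)).flip S)).hasFDerivAt.comp_hasDerivAt 0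
    (hasDerivAt_exp_smul_const (𝕂 := ℝ) K 0)
  rw [zero_smul, NormedSpace.exp_zero, one_mul] at h
  exact h

lemma exp_smul_mem_orthogonalGroup {K : Matrix n n ℝ} (hK : Kᵀ = -K) (t : ℝ) :
    NormedSpace.exp (t • K) ∈ orthogonalGroup n ℝ := by
  rw [mem_orthogonalGroup_iff, ← exp_transpose, transpose_smul, hK, smul_neg,
    ← exp_add_of_commute _ _ ((Commute.refl (t • K)).neg_right), add_neg_cancel,
    NormedSpace.exp_zero]

lemma householder_mem_orthogonalGroup {x : n → ℝ} (hx : x ≠ 0) :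
    1 - (2 / (x ⬝ᵥ x)) • vecMulVec x x ∈ orthogonalGroup n ℝ := by
  have hc : 2 / (x ⬝ᵥ x) * (x ⬝ᵥ x) = 2 :=
    div_mul_cancel₀ _ (by simpa using dotProduct_self_star_pos_iff.2 hx : 0 < x ⬝ᵥ x).ne'
  rw [mem_orthogonalGroup_iff, transpose_sub, transpose_one, transpose_smul, transpose_vecMulVec]
  simp only [sub_mul, mul_sub, one_mul, mul_one, smul_mul_smul_comm, vecMulVec_mul_vecMulVec,
    vecMulVec_smul, smul_smul]
  linear_combination (norm := module) (2 / (x ⬝ᵥ x) * hc) • vecMulVec x x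

lemma trace_mul_eq_zero_of_forall_trace_le {S : Matrix n n ℝ}
    (hS : ∀ Q ∈ orthogonalGroup n ℝ, trace (Q * S) ≤ trace S) {K : Matrix n n ℝ} (hK : Kᵀ = -K) :
    trace (K * S) = 0 := by
  refine IsLocalMax.hasDerivAt_eq_zero ?_ (hasDerivAt_trace_exp_smul_mul K S)
  refine Filter.Eventually.of_forall fun t => ?_
  simpa using hS _ (exp_smul_mem_orthogonalGroup hK t)

lemma transpose_eq_of_forall_trace_le {S : Matrix n n ℝ}
    (hS : ∀ Q ∈ orthogonalGroup n ℝ, trace (Q * S) ≤ trace S) : Sᵀ = S := by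
  ext i j
  have hK : (single i j (1 : ℝ) - single j i 1)ᵀ = -(single i j 1 - single j i 1) := by
    simp [transpose_sub, transpose_single]
  have := trace_mul_eq_zero_of_forall_trace_le hS hK
  simp only [sub_mul, trace_sub, trace_single_mul, one_smul, sub_eq_zero] at this
  exact this

lemma posSemidef_of_forall_trace_le {S : Matrix n n ℝ}
    (hS : ∀ Q ∈ orthogonalGroup n ℝ, trace (Q * S) ≤ trace S) : S.PosSemidef := by
  refine posSemidef_iff_dotProduct_mulVec.2 ⟨transpose_eq_of_forall_trace_le hS, fun x => ?_⟩
  rcases eq_or_ne x 0 with rfl | hx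
  · simp
  have h := hS _ (householder_mem_orthogonalGroup hx)
  rw [sub_mul, one_mul, trace_sub, smul_mul_assoc, trace_smul, vecMulVec_mul, trace_vecMulVec,
    dotProduct_comm x (x ᵥ* S), ← dotProduct_mulVec, smul_eq_mul, sub_le_self_iff] at h
  rw [star_trivial]
  exact nonneg_of_mul_nonneg_right h
    (by simpa using dotProduct_self_star_pos_iff.2 hx)

end TraceMaximal

lemma Matrix.IsHermitian.l2_opNorm_sub_one_le {n : Type*} [Fintype n] [DecidableEq n]
    {S : Matrix n n ℝ} (hS : S.IsHermitian) {c : ℝ} (hc : 0 ≤ c)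
    (h : ∀ i, |hS.eigenvalues i - 1| ≤ c) : ‖S - 1‖ ≤ c := by
  have : IsSelfAdjoint S := hS.isSelfAdjoint
  rw [← cfc_id' ℝ S, ← cfc_const_one ℝ S, ← cfc_sub ..]
  refine norm_cfc_le hc fun x hx => ?_
  rw [hS.spectrum_real_eq_range_eigenvalues] at hx
  obtain ⟨i, rfl⟩ := hx
  exact h i

lemma dotProduct_self_eq_add_projection {m k : Type*} [Fintype m] [DecidableEq m] [Fintype k]
    [DecidableEq k] {U : Matrix m k ℝ} (hU : Uᵀ * U = 1) (z : m → ℝ) :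
    (Uᵀ *ᵥ z) ⬝ᵥ (Uᵀ *ᵥ z) + ((1 - U * Uᵀ) *ᵥ z) ⬝ᵥ ((1 - U * Uᵀ) *ᵥ z) = z ⬝ᵥ z := by
  have hP : (1 - U * Uᵀ)ᵀ * (1 - U * Uᵀ) = 1 - U * Uᵀ := by
    have hUU : U * Uᵀ * (U * Uᵀ) = U * Uᵀ := by
      rw [Matrix.mul_assoc, ← Matrix.mul_assoc Uᵀ, hU, Matrix.one_mul]
    rw [transpose_sub, transpose_one, transpose_mul, transpose_transpose, sub_mul, mul_sub,
      mul_sub, hUU]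
    simp
  rw [dotProduct_mulVec_self, dotProduct_mulVec_self, hP, transpose_transpose, ← dotProduct_add,
    ← add_mulVec, add_sub_cancel, one_mulVec]

lemma dotProduct_projection_le_sinTheta_sq {p d : ℕ} (U : Matrix (Fin p) (Fin d) ℝ)
    {Uhat : Matrix (Fin p) (Fin d) ℝ} (hUhat : Uhatᵀ * Uhat = 1) {y : Fin d → ℝ}
    (hy : y ⬝ᵥ y = 1) :
    ((1 - U * Uᵀ) *ᵥ (Uhat *ᵥ y)) ⬝ᵥ ((1 - U * Uᵀ) *ᵥ (Uhat *ᵥ y)) ≤ sinTheta Uhat U ^ 2 := by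
  have hMz : ((1 - U * Uᵀ) * (Uhat * Uhatᵀ)) *ᵥ (Uhat *ᵥ y) = (1 - U * Uᵀ) *ᵥ (Uhat *ᵥ y) := by
    rw [mulVec_mulVec, mulVec_mulVec, Matrix.mul_assoc, Matrix.mul_assoc, hUhat, Matrix.mul_one]
  have hz : ‖WithLp.toLp 2 (Uhat *ᵥ y)‖ = 1 := by
    rw [← pow_eq_one_iff_of_nonneg (norm_nonneg _) two_ne_zero, ← dotProduct_self_eq_norm_sq,
      dotProduct_mulVec_self, hUhat, one_mulVec, hy]
  have hle := ((1 - U * Uᵀ) * (Uhat * Uhatᵀ)).l2_opNorm_mulVec (WithLp.toLp 2 (Uhat *ᵥ y))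
  rw [hz, mul_one] at hle
  rw [sinTheta, spec_eq_l2_opNorm, dotProduct_self_eq_norm_sq, ← hMz]
  exact pow_le_pow_left₀ (norm_nonneg _) hle 2

lemma abs_sub_one_le_sinTheta_sq_of_mulVec_eq_smul {p d : ℕ}
    {U Uhat : Matrix (Fin p) (Fin d) ℝ} (hU : Uᵀ * U = 1) (hUhat : Uhatᵀ * Uhat = 1)
    {Ξ : Matrix (Fin d) (Fin d) ℝ} (hΞ : Ξ ∈ orthogonalGroup (Fin d) ℝ) {μ : ℝ} (hμ : 0 ≤ μ)
    {y : Fin d → ℝ} (hy : y ⬝ᵥ y = 1) (hSy : (Ξᵀ * (Uᵀ * Uhat)) *ᵥ y = μ • y) :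
    |μ - 1| ≤ sinTheta Uhat U ^ 2 := by
  have hUz : Uᵀ *ᵥ (Uhat *ᵥ y) = μ • (Ξ *ᵥ y) := by
    rw [mulVec_mulVec, ← one_mul (Uᵀ * Uhat), ← (mem_orthogonalGroup_iff (Fin d) ℝ).1 hΞ,
      mul_assoc, ← mulVec_mulVec, hSy, mulVec_smul]
  have hUz2 : (Uᵀ *ᵥ (Uhat *ᵥ y)) ⬝ᵥ (Uᵀ *ᵥ (Uhat *ᵥ y)) = μ ^ 2 := by
    rw [hUz, dotProduct_smul, smul_dotProduct, dotProduct_mulVec_self,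
      (mem_orthogonalGroup_iff' (Fin d) ℝ).1 hΞ, one_mulVec, hy]
    simp [sq]
  have hz : (Uhat *ᵥ y) ⬝ᵥ (Uhat *ᵥ y) = 1 := by
    rw [dotProduct_mulVec_self, hUhat, one_mulVec, hy]
  have hpyth := dotProduct_self_eq_add_projection hU (Uhat *ᵥ y)
  have hsin := dotProduct_projection_le_sinTheta_sq U hUhat hy
  have hr : 0 ≤ ((1 - U * Uᵀ) *ᵥ (Uhat *ᵥ y)) ⬝ᵥ ((1 - U * Uᵀ) *ᵥ (Uhat *ᵥ y)) := by
    simpa using dotProduct_self_star_nonneg ((1 - U * Uᵀ) *ᵥ (Uhat *ᵥ y))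
  rw [hUz2, hz] at hpyth
  have hμ1 : μ ≤ 1 := by nlinarith
  rw [abs_of_nonpos (by linarith)]
  nlinarith

/-- If `Ξ` is the orthogonal matrix minimizing `‖W − UᵀÛ‖_F` over orthogonal `W`,
then `‖UᵀÛ − Ξ‖₂ ≤ ‖sin Θ(Û, U)‖₂²`. -/
theorem stmt10 {p d : ℕ} (U Uhat : Matrix (Fin p) (Fin d) ℝ)
    (Ξ : Matrix (Fin d) (Fin d) ℝ)
    (hU : Uᵀ * U = 1) (hUhat : Uhatᵀ * Uhat = 1)
    (hΞ : Ξ * Ξᵀ = 1)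
    (hmin : ∀ W : Matrix (Fin d) (Fin d) ℝ, W * Wᵀ = 1 →
      frob (Ξ - Uᵀ * Uhat) ≤ frob (W - Uᵀ * Uhat)) :
    spec (Uᵀ * Uhat - Ξ) ≤ sinTheta Uhat U ^ 2 := by
  have hΞG : Ξ ∈ orthogonalGroup (Fin d) ℝ := (mem_orthogonalGroup_iff (Fin d) ℝ).2 hΞ
  set S := Ξᵀ * (Uᵀ * Uhat)
  have hS : S.PosSemidef := posSemidef_of_forall_trace_le <|
    trace_mul_le_of_forall_frob_le hΞG fun W hW =>
      hmin W ((mem_orthogonalGroup_iff (Fin d) ℝ).1 hW)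
  have hμ (i : Fin d) : |hS.1.eigenvalues i - 1| ≤ sinTheta Uhat U ^ 2 := by
    refine abs_sub_one_le_sinTheta_sq_of_mulVec_eq_smul hU hUhat hΞG (hS.eigenvalues_nonneg i)
      ?_ (hS.1.mulVec_eigenvectorBasis i)
    rw [dotProduct_self_eq_norm_sq, WithLp.toLp_ofLp, (hS.1.eigenvectorBasis).orthonormal.1 i,
      one_pow]
  have hA : Uᵀ * Uhat - Ξ = Ξ * (S - 1) := by
    rw [mul_sub, mul_one, ← mul_assoc, hΞ, one_mul]
  rw [spec_eq_l2_opNorm, hA, CStarRing.norm_mem_unitary_mul _ hΞG]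
  exact hS.1.l2_opNorm_sub_one_le (sq_nonneg _) hμ
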